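/- There exists a Polish abelian topological group H with no torsion that is not topologically isomorphic to any subgroup of a divisible analytic abelian topological group with no torsion; i.e. there is no divisible torsion-free abelian topological group G whose underlying space is analytic together with an injective continuous group homomorphism H → G that is a topological embedding. -/

import Mathlib

/-- A topological space is analytic if it is metrizable and a continuous image of a
Polish space. -/
def IsAnalyticSpace (X : Type*) [TopologicalSpace X] : Prop :=
  TopologicalSpace.MetrizableSpace X ∧
    ∃ (P : Type) (tP : TopologicalSpace P), @PolishSpace P tP ∧
      ∃ f : P → X, @Continuous P X tP _ f ∧ Function.Surjective f

/-- A divisible torsion-free abelian topological group with analytic underlying space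
together with a topological-group embedding of `H` into it. -/
structure AnalyticDivisibleTorsionFreeExtension (H : Type) [AddCommGroup H]
    [TopologicalSpace H] : Type 1 where
  carrier : Type
  [grp : AddCommGroup carrier]
  [top : TopologicalSpace carrier]
  topGrp : IsTopologicalAddGroup carrier
  analytic : IsAnalyticSpace carrier
  divisible : ∀ (a : carrier) (n : ℕ), 0 < n → ∃ x : carrier, n • x = a
  torsionFree : ∀ (x : carrier) (n : ℕ), 0 < n → n • x = 0 → x = 0
  embed : H →+ carrier
  embed_injective : Function.Injective embed
  embed_continuous : Continuous embed
  embed_isEmbedding : Topology.IsEmbedding embed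

/-- A Polish torsion-free abelian topological group admitting no embedding into a
divisible analytic torsion-free abelian topological group. -/
structure NonEmbeddablePolishGroup : Type 1 where
  carrier : Type
  [grp : AddCommGroup carrier]
  [top : TopologicalSpace carrier]
  topGrp : IsTopologicalAddGroup carrier
  polish : PolishSpace carrier
  torsionFree : ∀ (x : carrier) (n : ℕ), 0 < n → n • x = 0 → x = 0
  no_extension : IsEmpty (AnalyticDivisibleTorsionFreeExtension carrier)



open Set Filter Topology Pointwise

section CategoryTools

variable {X : Type*} [TopologicalSpace X]

/-- From `s =ᵇ u` extract meagerness of the two differences. -/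
lemma isMeagre_diff_of_residualEq {s u : Set X} (h : s =ᶠ[residual X] u) :
    IsMeagre (s \ u) ∧ IsMeagre (u \ s) := by
  have h' : {x | s x = u x} ∈ residual X := h
  constructor <;>
  · rw [IsMeagre]
    refine Filter.mem_of_superset h' ?_
    intro x hx
    simp only [Set.mem_setOf_eq] at hx
    simp only [Set.mem_compl_iff, Set.mem_diff]
    intro ⟨h1, h2⟩
    change (x ∈ s) = (x ∈ u) at hx
    first
      | exact h2 (hx ▸ h1)
      | exact h2 (hx ▸ h1 : _)

lemma BaireMeasurableSet.exists_isOpen_diffs {s : Set X} (h : BaireMeasurableSet s) :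
    ∃ u : Set X, IsOpen u ∧ IsMeagre (s \ u) ∧ IsMeagre (u \ s) := by
  rcases h.residualEq_isOpen with ⟨u, hu, hsu⟩
  exact ⟨u, hu, isMeagre_diff_of_residualEq hsu⟩

/-- A nonempty open set in a Baire space is not meager. -/
lemma IsOpen.not_isMeagre_of_nonempty [BaireSpace X] {u : Set X}
    (hu : IsOpen u) (hne : u.Nonempty) : ¬ IsMeagre u := by
  intro hm
  have : Dense uᶜ := dense_of_mem_residual hm
  rcases hne with ⟨x, hx⟩
  rcases this.inter_open_nonempty u hu ⟨x, hx⟩ with ⟨y, hy1, hy2⟩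
  exact hy2 hy1

/-- Translates of meager sets are meager, in a topological additive group. -/
lemma IsMeagre.vadd {G : Type*} [TopologicalSpace G] [AddGroup G] [IsTopologicalAddGroup G]
    (g : G) {s : Set G} (hs : IsMeagre s) : IsMeagre ((g + ·) '' s) := by
  have h := (Homeomorph.addLeft g).symm.residual_map_eq
  rw [IsMeagre] at hs ⊢
  have : ((g + ·) '' s)ᶜ = (Homeomorph.addLeft g).symm ⁻¹' sᶜ := by
    ext x
    simp only [Set.mem_compl_iff, Set.mem_preimage, Homeomorph.addLeft_symm, Homeomorph.coe_addLeft]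
    constructor
    · intro hx hmem
      exact hx ⟨-g + x, hmem, add_neg_cancel_left g x⟩
    · rintro hx ⟨y, hy, rfl⟩
      exact hx (by simpa using hy)
  rw [this]
  rw [← h] at hs
  exact hs

/-- **Pettis' lemma** : if `A` is a non-meager Baire-measurable set in a topological
additive group whose space is Baire, then `A - A` is a neighborhood of `0`. -/
lemma pettis {G : Type*} [TopologicalSpace G] [AddCommGroup G] [IsTopologicalAddGroup G]
    [BaireSpace G] {A : Set G} (hA : BaireMeasurableSet A) (hnm : ¬ IsMeagre A) :
    A - A ∈ 𝓝 (0 : G) := by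
  rcases hA.exists_isOpen_diffs with ⟨O, hO, hAO, hOA⟩
  have hOne : O.Nonempty := by
    rcases Set.eq_empty_or_nonempty O with rfl | h
    · exfalso; apply hnm
      have : A ⊆ A \ (∅ : Set G) := by simp
      exact hAO.mono (by simpa using this)
    · exact h
  rcases hOne with ⟨x₀, hx₀⟩
  have key : ∀ g ∈ (fun y => y - x₀) '' O, g ∈ A - A := by
    rintro g ⟨z, hz, rfl⟩
    -- z ∈ O, g = z - x₀
    set g' := z - x₀ with hg'
    have hT : IsOpen (O ∩ ((g' + ·) '' O)) := hO.inter ((Homeomorph.addLeft g').isOpenMap O hO)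
    have hTne : (O ∩ ((g' + ·) '' O)).Nonempty := ⟨g' + x₀, by
      constructor
      · simpa [hg'] using hz
      · exact ⟨x₀, hx₀, rfl⟩⟩
    have hN : IsMeagre ((O \ A) ∪ ((g' + ·) '' O \ (g' + ·) '' A)) := by
      have h2 : IsMeagre ((g' + ·) '' O \ (g' + ·) '' A) := by
        have : (g' + ·) '' O \ (g' + ·) '' A ⊆ (g' + ·) '' (O \ A) := by
          rintro y ⟨⟨w, hw, rfl⟩, hy2⟩
          exact ⟨w, ⟨hw, fun hwa => hy2 ⟨w, hwa, rfl⟩⟩, rfl⟩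
        exact (hOA.vadd g').mono this
      rw [IsMeagre] at hOA h2 ⊢
      rw [Set.compl_union]
      exact Filter.inter_mem hOA h2
    have := hT.not_isMeagre_of_nonempty hTne
    have hsub : ¬ (O ∩ ((g' + ·) '' O)) ⊆ ((O \ A) ∪ ((g' + ·) '' O \ (g' + ·) '' A)) := by
      intro hsub
      exact this (hN.mono hsub)
    rcases Set.not_subset.1 hsub with ⟨y, ⟨hyO, hygO⟩, hyN⟩
    rw [Set.mem_union, not_or] at hyN
    have hyA : y ∈ A := by
      by_contra h
      exact hyN.1 ⟨hyO, h⟩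
    have hygA : y ∈ (g' + ·) '' A := by
      by_contra h
      exact hyN.2 ⟨hygO, h⟩
    rcases hygA with ⟨a, ha, rfl⟩
    exact ⟨g' + a, hyA, a, ha, by rw [hg']; abel⟩
  have hOpen : IsOpen ((fun y => y - x₀) '' O) := by
    have : (fun y => y - x₀) '' O = (Homeomorph.addRight (-x₀)) '' O := by
      ext y; simp [sub_eq_add_neg]
    rw [this]
    exact (Homeomorph.addRight (-x₀)).isOpenMap O hO
  have h0 : (0 : G) ∈ (fun y => y - x₀) '' O := ⟨x₀, hx₀, by abel⟩
  exact Filter.mem_of_superset (hOpen.mem_nhds h0) key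

end CategoryTools


open Set Filter Topology TopologicalSpace

section Hull

variable {X : Type*} [TopologicalSpace X]

lemma isMeagre_iUnion' {ι : Sort*} [Countable ι] {f : ι → Set X}
    (h : ∀ i, IsMeagre (f i)) : IsMeagre (⋃ i, f i) := by
  rw [IsMeagre, Set.compl_iUnion]
  exact (countable_iInter_mem).mpr h

lemma isMeagre_biUnion' {ι : Type*} {s : Set ι} (hs : s.Countable) {f : ι → Set X}
    (h : ∀ i ∈ s, IsMeagre (f i)) : IsMeagre (⋃ i ∈ s, f i) := by
  rw [IsMeagre, Set.compl_iUnion₂]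
  exact (countable_bInter_mem hs).mpr h

variable [SecondCountableTopology X]

/-- The union of all open sets whose intersection with `S` is meager. -/
def meagerKernel (S : Set X) : Set X := ⋃₀ {V | IsOpen V ∧ IsMeagre (S ∩ V)}

/-- The Baire-category hull of a set. -/
def catHull (S : Set X) : Set X := S ∪ (meagerKernel S)ᶜ

lemma subset_catHull (S : Set X) : S ⊆ catHull S := Set.subset_union_left

lemma isOpen_meagerKernel (S : Set X) : IsOpen (meagerKernel S) :=
  isOpen_sUnion fun _ h => h.1

lemma isMeagre_inter_meagerKernel (S : Set X) : IsMeagre (S ∩ meagerKernel S) := by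
  have hsub : S ∩ meagerKernel S ⊆
      ⋃ b ∈ {b ∈ countableBasis X | IsMeagre (S ∩ b)}, (S ∩ b) := by
    rintro x ⟨hxS, hxW⟩
    rcases hxW with ⟨V, ⟨hVopen, hVmeager⟩, hxV⟩
    rcases (isBasis_countableBasis X).exists_subset_of_mem_open hxV hVopen with
      ⟨b, hb, hxb, hbV⟩
    have : IsMeagre (S ∩ b) := hVmeager.mono (Set.inter_subset_inter_right _ hbV)
    exact Set.mem_biUnion ⟨hb, this⟩ ⟨hxS, hxb⟩
  have : IsMeagre (⋃ b ∈ {b ∈ countableBasis X | IsMeagre (S ∩ b)}, (S ∩ b)) := by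
    apply isMeagre_biUnion' ((countable_countableBasis X).mono (Set.sep_subset _ _))
    exact fun b hb => hb.2
  exact this.mono hsub

lemma catHull_eq (S : Set X) :
    catHull S = (meagerKernel S)ᶜ ∪ (S ∩ meagerKernel S) := by
  ext x
  simp only [catHull, Set.mem_union, Set.mem_compl_iff, Set.mem_inter_iff]
  by_cases h : x ∈ meagerKernel S <;> tauto

lemma baireMeasurableSet_catHull (S : Set X) : BaireMeasurableSet (catHull S) := by
  rw [catHull_eq]
  exact ((isOpen_meagerKernel S).baireMeasurableSet.compl).union
    (isMeagre_inter_meagerKernel S).baireMeasurableSet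

lemma isMeagre_catHull_diff {S B : Set X} (hB : BaireMeasurableSet B) (hSB : S ⊆ B) :
    IsMeagre (catHull S \ B) := by
  rcases hB.compl.residualEq_isOpen with ⟨O, hO, hBO⟩
  have h1 : IsMeagre (Bᶜ \ O) := (isMeagre_diff_of_residualEq hBO).1
  have h2 : IsMeagre (O \ Bᶜ) := (isMeagre_diff_of_residualEq hBO).2
  have hOW : O ⊆ meagerKernel S := by
    intro x hx
    refine ⟨O, ⟨hO, ?_⟩, hx⟩
    have : S ∩ O ⊆ O \ Bᶜ := fun y ⟨hyS, hyO⟩ => ⟨hyO, fun hyB => hyB (hSB hyS)⟩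
    exact h2.mono this
  have hsub : catHull S \ B ⊆ Bᶜ \ O := by
    rintro x ⟨hx1, hx2⟩
    rcases hx1 with hxS | hxW
    · exact absurd (hSB hxS) hx2
    · exact ⟨hx2, fun hxO => hxW (hOW hxO)⟩
  exact h1.mono hsub

end Hull

section Souslin

open PiNat List

variable {X : Type*} [TopologicalSpace X] [PolishSpace X]

/-- The cylinder set determined by a finite list (via `PiNat.res`). -/
def cylSet (s : List ℕ) : Set (ℕ → ℕ) := {β | PiNat.res β s.length = s}

lemma cylSet_nil : cylSet ([] : List ℕ) = Set.univ := by
  ext β; simp [cylSet]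

lemma cylSet_res (β : ℕ → ℕ) (n : ℕ) : cylSet (PiNat.res β n) = PiNat.cylinder β n := by
  rw [PiNat.cylinder_eq_res]
  ext γ
  simp [cylSet, PiNat.res_length]

lemma cylSet_eq_iUnion (s : List ℕ) : cylSet s = ⋃ k : ℕ, cylSet (k :: s) := by
  ext β
  simp only [Set.mem_iUnion]
  constructor
  · intro hβ
    refine ⟨β s.length, ?_⟩
    show PiNat.res β (β s.length :: s).length = β s.length :: s
    rw [List.length_cons]
    rw [PiNat.res_succ]
    rw [show PiNat.res β s.length = s from hβ]
  · rintro ⟨k, hk⟩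
    have : PiNat.res β (k :: s).length = k :: s := hk
    rw [List.length_cons, PiNat.res_succ] at this
    exact (List.cons_eq_cons.1 this).2

/-- **Lusin–Sierpiński**: the range of a continuous map from a Polish space into a Polish
space is Baire measurable. -/
theorem baireMeasurableSet_range_of_polish {S : Type*} [TopologicalSpace S] [PolishSpace S]
    {g : S → X} (hg : Continuous g) : BaireMeasurableSet (Set.range g) := by
  rcases isEmpty_or_nonempty S with hS | hS
  · have : Set.range g = ∅ := Set.range_eq_empty g
    rw [this]
    exact IsMeagre.empty.baireMeasurableSet
  rcases PolishSpace.exists_nat_nat_continuous_surjective S with ⟨f, fc, fs⟩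
  have hrange : Set.range (g ∘ f) = Set.range g := by
    rw [Set.range_comp, fs.range_eq, Set.image_univ]
  rw [← hrange]
  set φ := g ∘ f with hφ
  have φc : Continuous φ := hg.comp fc
  clear_value φ
  clear hφ fs fc hrange hS
  -- Souslin scheme
  set A : List ℕ → Set X := fun s => φ '' cylSet s with hA
  set E : List ℕ → Set X := fun s => catHull (A s) ∩ closure (A s) with hE
  have hAE : ∀ s, A s ⊆ E s := fun s =>
    Set.subset_inter (subset_catHull _) subset_closure
  have hEbm : ∀ s, BaireMeasurableSet (E s) :=
    fun s => (baireMeasurableSet_catHull _).inter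
      (BaireMeasurableSet.of_compl (isClosed_closure.isOpen_compl.baireMeasurableSet))
  have hEmin : ∀ (s : List ℕ) (B : Set X), BaireMeasurableSet B → A s ⊆ B →
      IsMeagre (E s \ B) := fun s B hB hAB =>
    (isMeagre_catHull_diff hB hAB).mono
      (Set.diff_subset_diff_left Set.inter_subset_left)
  have hAsplit : ∀ s : List ℕ, A s = ⋃ k : ℕ, A (k :: s) := by
    intro s
    rw [hA]
    simp only
    rw [cylSet_eq_iUnion s, Set.image_iUnion]
  set M : Set X := ⋃ s : List ℕ, (E s \ ⋃ k : ℕ, E (k :: s)) with hM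
  have hMmeager : IsMeagre M := by
    apply isMeagre_iUnion'
    intro s
    apply hEmin
    · exact BaireMeasurableSet.iUnion fun k => hEbm (k :: s)
    · rw [hAsplit s]
      exact Set.iUnion_mono fun k => hAE (k :: s)
  have hkey : ∀ x, x ∈ E [] → x ∉ M → x ∈ Set.range φ := by
    intro x hx hxM
    classical
    -- recursively build a branch
    have step : ∀ s : List ℕ, x ∈ E s → ∃ k : ℕ, x ∈ E (k :: s) := by
      intro s hs
      by_contra hcon
      push_neg at hcon
      apply hxM
      refine Set.mem_iUnion.2 ⟨s, hs, ?_⟩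
      intro hmem
      rcases Set.mem_iUnion.1 hmem with ⟨k, hk⟩
      exact hcon k hk
    let pick : List ℕ → ℕ := fun s => if h : ∃ k, x ∈ E (k :: s) then h.choose else 0
    let chain : ℕ → List ℕ := fun n => Nat.rec [] (fun _ s => pick s :: s) n
    have hchain : ∀ n, x ∈ E (chain n) := by
      intro n
      induction n with
      | zero => exact hx
      | succ n ih =>
        have h := step (chain n) ih
        show x ∈ E (pick (chain n) :: chain n)
        have : pick (chain n) = h.choose := by simp [pick, dif_pos h]
        rw [this]
        exact h.choose_spec
    set β : ℕ → ℕ := fun n => pick (chain n) with hβ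
    have hchain_res : ∀ n, chain n = PiNat.res β n := by
      intro n
      induction n with
      | zero => rfl
      | succ n ih =>
        show pick (chain n) :: chain n = β n :: PiNat.res β n
        rw [show β n = pick (chain n) from rfl, ih]
    refine ⟨β, ?_⟩
    symm
    -- x is in the closure of every φ '' cylinder β n; conclude x = φ β by metric arguments
    letI := upgradeIsCompletelyMetrizable X
    by_contra hne
    have hd : 0 < dist x (φ β) := dist_pos.2 hne
    -- find a cylinder mapped into a small ball
    have hball : φ ⁻¹' Metric.ball (φ β) (dist x (φ β) / 2) ∈ nhds β :=
      φc.continuousAt.preimage_mem_nhds (Metric.ball_mem_nhds _ (by linarith))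
    rcases (PiNat.isTopologicalBasis_cylinders (fun _ : ℕ => ℕ)).mem_nhds_iff.1 hball with
      ⟨v, ⟨y, n, rfl⟩, hβv, hvsub⟩
    have hcyl : PiNat.cylinder β n = PiNat.cylinder y n :=
      PiNat.mem_cylinder_iff_eq.1 hβv
    have hxcl : x ∈ closure (A (PiNat.res β n)) := (hchain_res n ▸ hchain n).2
    have himg : A (PiNat.res β n) ⊆ Metric.ball (φ β) (dist x (φ β) / 2) := by
      rw [hA]
      simp only
      rw [cylSet_res, hcyl]
      exact Set.image_subset_iff.2 hvsub
    have : x ∈ closure (Metric.ball (φ β) (dist x (φ β) / 2)) :=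
      closure_mono himg hxcl
    have hle : dist x (φ β) ≤ dist x (φ β) / 2 := by
      have := Metric.closure_ball_subset_closedBall this
      simpa [Metric.mem_closedBall] using this
    linarith
  have hfinal : Set.range φ = (E [] \ M) ∪ (Set.range φ ∩ M) := by
    apply Set.Subset.antisymm
    · intro x hx
      by_cases hxM : x ∈ M
      · exact Or.inr ⟨hx, hxM⟩
      · refine Or.inl ⟨?_, hxM⟩
        have : Set.range φ = A [] := by rw [hA]; simp [cylSet_nil]
        exact hAE [] (this ▸ hx)
    · rintro x (⟨hx1, hx2⟩ | ⟨hx, -⟩)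
      · exact hkey x hx1 hx2
      · exact hx
  rw [hfinal]
  refine ((hEbm []).diff hMmeager.baireMeasurableSet).union ?_
  exact (hMmeager.mono Set.inter_subset_right).baireMeasurableSet

end Souslin

section TheGroup

open Filter Topology

noncomputable section

/-- The coordinate norm on `ℤ` used in position `k`. -/
def nu (k : ℕ) (n : ℤ) : ℝ := (n.natAbs : ℝ) / (2 * (k + 1)) + (if Even n then 0 else 1)

lemma nu_nonneg (k : ℕ) (n : ℤ) : 0 ≤ nu k n := by
  unfold nu
  have h1 : (0:ℝ) ≤ (n.natAbs : ℝ) / (2 * (k + 1)) := by positivity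
  have h2 : (0:ℝ) ≤ (if Even n then (0:ℝ) else 1) := by split <;> norm_num
  linarith

@[simp] lemma nu_zero (k : ℕ) : nu k 0 = 0 := by simp [nu]

lemma nu_neg (k : ℕ) (n : ℤ) : nu k (-n) = nu k n := by
  simp [nu, Int.natAbs_neg, even_neg]

lemma nu_add_le (k : ℕ) (m n : ℤ) : nu k (m + n) ≤ nu k m + nu k n := by
  unfold nu
  have habs : ((m + n).natAbs : ℝ) ≤ (m.natAbs : ℝ) + (n.natAbs : ℝ) := by
    have := Int.natAbs_add_le m n
    exact_mod_cast this
  have hdiv : ((m + n).natAbs : ℝ) / (2 * (k + 1)) ≤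
      (m.natAbs : ℝ) / (2 * (k + 1)) + (n.natAbs : ℝ) / (2 * (k + 1)) := by
    rw [← add_div]
    apply div_le_div_of_nonneg_right habs  -- might be div_le_div_of_le_left; fix if error
    positivity
  have hpar : (if Even (m + n) then (0:ℝ) else 1) ≤
      (if Even m then (0:ℝ) else 1) + (if Even n then (0:ℝ) else 1) := by
    by_cases hm : Even m <;> by_cases hn : Even n
    · simp [hm, hn, hm.add hn]
    · split <;> norm_num [hm, hn]
    · split <;> norm_num [hm, hn]
    · have : Even (m + n) := by
        rcases Int.not_even_iff_odd.1 hm with ⟨a, ha⟩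
        rcases Int.not_even_iff_odd.1 hn with ⟨b, hb⟩
        exact ⟨a + b + 1, by rw [ha, hb]; ring⟩
      simp [hm, hn, this]
  linarith

lemma natAbs_le_nu (k : ℕ) (n : ℤ) : (n.natAbs : ℝ) / (2 * (k + 1)) ≤ nu k n := by
  unfold nu
  have : (0:ℝ) ≤ (if Even n then (0:ℝ) else 1) := by split <;> norm_num
  linarith

lemma eq_zero_of_nu_lt (k : ℕ) (n : ℤ) (h : nu k n < 1 / (2 * (k + 1))) : n = 0 := by
  by_contra hn
  have h1 : (1:ℝ) ≤ (n.natAbs : ℝ) := by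
    have : 1 ≤ n.natAbs := Nat.one_le_iff_ne_zero.2 (Int.natAbs_ne_zero.2 hn)
    exact_mod_cast this
  have h2 : (1:ℝ) / (2 * (k + 1)) ≤ (n.natAbs : ℝ) / (2 * (k + 1)) := by
    apply div_le_div_of_nonneg_right h1  -- may need different name
    positivity
  have := (natAbs_le_nu k n).trans_lt h
  linarith

/-- The subgroup of `ℕ → ℤ` of sequences `x` with `nu k (x k) → 0`. -/
def H0sub : AddSubgroup (ℕ → ℤ) where
  carrier := {x | Tendsto (fun k => nu k (x k)) atTop (𝓝 0)}
  zero_mem' := by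
    simp only [Set.mem_setOf_eq, Pi.zero_apply, nu_zero]
    exact tendsto_const_nhds
  add_mem' := by
    intro a b ha hb
    simp only [Set.mem_setOf_eq, Pi.add_apply] at *
    have h0 : Tendsto (fun k => nu k (a k) + nu k (b k)) atTop (𝓝 0) := by
      simpa using ha.add hb
    exact squeeze_zero (fun k => nu_nonneg _ _) (fun k => nu_add_le _ _ _) h0
  neg_mem' := by
    intro a ha
    simp only [Set.mem_setOf_eq, Pi.neg_apply] at *
    simpa only [nu_neg] using ha

/-- The underlying Polish group of the counterexample. -/
def H0 : Type := ↥H0sub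

instance : AddCommGroup H0 := inferInstanceAs (AddCommGroup ↥H0sub)

/-- The underlying integer sequence of an element of `H0`. -/
def H0.seq (x : H0) : ℕ → ℤ := (x : ↥H0sub).val

lemma H0.seq_add (x y : H0) : (x + y).seq = x.seq + y.seq := rfl
lemma H0.seq_neg (x : H0) : (-x).seq = -(x.seq) := rfl
lemma H0.seq_sub (x y : H0) : (x - y).seq = x.seq - y.seq := rfl
lemma H0.seq_zero : (0 : H0).seq = 0 := rfl
lemma H0.seq_injective : Function.Injective H0.seq := fun a b h => Subtype.ext h

lemma H0.tendsto (x : H0) : Tendsto (fun k => nu k (x.seq k)) atTop (𝓝 0) := (x : ↥H0sub).2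

lemma H0.bddAbove (x y : H0) :
    BddAbove (Set.range fun k => nu k (x.seq k - y.seq k)) := by
  have h := H0.tendsto (x - y)
  have : Tendsto (fun k => nu k (x.seq k - y.seq k)) atTop (𝓝 0) := by
    refine h.congr fun k => by rw [H0.seq_sub]; rfl
  exact this.bddAbove_range

noncomputable instance : MetricSpace H0 where
  dist x y := ⨆ k, nu k (x.seq k - y.seq k)
  dist_self x := by simp
  dist_comm x y := by
    refine congrArg iSup (funext fun k => ?_)
    rw [← nu_neg, neg_sub]
  dist_triangle x y z := by
    apply ciSup_le
    intro k
    have h1 : nu k (x.seq k - z.seq k) ≤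
        nu k (x.seq k - y.seq k) + nu k (y.seq k - z.seq k) := by
      have := nu_add_le k (x.seq k - y.seq k) (y.seq k - z.seq k)
      rwa [sub_add_sub_cancel] at this
    exact h1.trans (add_le_add (le_ciSup (H0.bddAbove x y) k) (le_ciSup (H0.bddAbove y z) k))
  eq_of_dist_eq_zero := by
    intro x y h
    apply H0.seq_injective
    funext k
    have h1 : nu k (x.seq k - y.seq k) ≤ 0 := h ▸ le_ciSup (H0.bddAbove x y) k
    have h2 := nu_nonneg k (x.seq k - y.seq k)
    have h3 : nu k (x.seq k - y.seq k) = 0 := le_antisymm h1 h2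
    have h4 : x.seq k - y.seq k = 0 := by
      apply eq_zero_of_nu_lt k
      rw [h3]
      positivity
    exact sub_eq_zero.1 h4

lemma H0.dist_eq (x y : H0) :
    dist x y = ⨆ k, nu k (x.seq k - y.seq k) := rfl

lemma H0.nu_le_dist (x y : H0) (k : ℕ) :
    nu k (x.seq k - y.seq k) ≤ dist x y := le_ciSup (H0.bddAbove x y) k

lemma H0.dist_le (x y : H0) (c : ℝ)
    (h : ∀ k, nu k (x.seq k - y.seq k) ≤ c) : dist x y ≤ c := ciSup_le h

lemma H0.dist_add_add (a b c d : H0) : dist (a + b) (c + d) ≤ dist a c + dist b d := by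
  apply H0.dist_le
  intro k
  have hco : (a + b).seq k - (c + d).seq k =
      (a.seq k - c.seq k) + (b.seq k - d.seq k) := by
    rw [H0.seq_add, H0.seq_add]
    show (a.seq k + b.seq k) - (c.seq k + d.seq k) = _
    ring
  rw [hco]
  exact (nu_add_le _ _ _).trans (add_le_add (H0.nu_le_dist a c k) (H0.nu_le_dist b d k))

lemma H0.dist_neg_neg (x y : H0) : dist (-x) (-y) = dist x y := by
  rw [H0.dist_eq, H0.dist_eq]
  refine congrArg iSup (funext fun k => ?_)
  have : (-x).seq k - (-y).seq k = -(x.seq k - y.seq k) := by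
    simp only [H0.seq_neg, Pi.neg_apply]
    ring
  rw [this, nu_neg]

instance : IsTopologicalAddGroup H0 where
  continuous_add := by
    rw [Metric.continuous_iff]
    rintro ⟨a, b⟩ ε hε
    refine ⟨ε / 2, by linarith, ?_⟩
    rintro ⟨c, d⟩ hd
    rw [Prod.dist_eq] at hd
    have h1 : dist c a < ε / 2 := lt_of_le_of_lt (le_max_left _ _) hd
    have h2 : dist d b < ε / 2 := lt_of_le_of_lt (le_max_right _ _) hd
    calc dist (c + d) (a + b) ≤ dist c a + dist d b := H0.dist_add_add c d a b
    _ < ε := by linarith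
  continuous_neg := by
    rw [Metric.continuous_iff]
    intro b ε hε
    refine ⟨ε, hε, fun a ha => ?_⟩
    calc dist (-a) (-b) = dist a b := H0.dist_neg_neg a b
    _ < ε := ha

end

end TheGroup

section GroupPolish

open Filter Topology

noncomputable section

/-- Elements of `H0` given by integer lists (finitely supported sequences). -/
def H0.ofList (l : List ℤ) : H0 :=
  ⟨fun k => l.getD k 0, by
    apply Tendsto.congr' (f₁ := fun _ => (0:ℝ))
    · filter_upwards [Filter.eventually_atTop.2 ⟨l.length, fun k hk => hk⟩] with k hk
      have : l.getD k 0 = 0 := List.getD_eq_default l 0 hk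
      rw [this, nu_zero]
    · exact tendsto_const_nhds⟩

lemma H0.ofList_seq (l : List ℤ) (k : ℕ) : (H0.ofList l).seq k = l.getD k 0 := rfl

instance : TopologicalSpace.SeparableSpace H0 := by
  refine ⟨⟨Set.range H0.ofList, Set.countable_range _, ?_⟩⟩
  rw [Metric.dense_iff]
  intro x r hr
  -- find N with tail small
  have hx := H0.tendsto x
  rw [Metric.tendsto_atTop] at hx
  rcases hx (r / 2) (by linarith) with ⟨N, hN⟩
  refine ⟨H0.ofList (List.ofFn (fun i : Fin N => x.seq i)), ?_, Set.mem_range_self _⟩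
  rw [Metric.mem_ball]
  have hdist : dist (H0.ofList (List.ofFn (fun i : Fin N => x.seq i))) x ≤ r / 2 := by
    apply H0.dist_le
    intro k
    by_cases hk : k < N
    · have : (H0.ofList (List.ofFn (fun i : Fin N => x.seq i))).seq k = x.seq k := by
        rw [H0.ofList_seq]
        rw [List.getD_eq_getElem?_getD]
        simp [List.getElem?_ofFn, hk]
      rw [this, sub_self, nu_zero]
      linarith
    · push_neg at hk
      have h0 : (H0.ofList (List.ofFn (fun i : Fin N => x.seq i))).seq k = 0 := by
        rw [H0.ofList_seq]
        apply List.getD_eq_default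
        simpa using hk
      rw [h0, zero_sub, nu_neg]
      have := hN k hk
      rw [Real.dist_eq, sub_zero, abs_of_nonneg (nu_nonneg _ _)] at this
      linarith
  linarith [hdist]

instance : CompleteSpace H0 := by
  apply Metric.complete_of_cauchySeq_tendsto
  intro u hu
  rw [Metric.cauchySeq_iff] at hu
  -- coordinatewise stabilization
  have stab : ∀ k : ℕ, ∃ N : ℕ, ∀ p ≥ N, (u p).seq k = (u N).seq k := by
    intro k
    rcases hu (1 / (2 * (k + 1))) (by positivity) with ⟨N, hN⟩
    refine ⟨N, fun p hp => ?_⟩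
    have hd := hN p hp N (le_refl N)
    have : nu k ((u p).seq k - (u N).seq k) < 1 / (2 * (k + 1)) :=
      lt_of_le_of_lt (H0.nu_le_dist _ _ k) hd
    have := eq_zero_of_nu_lt k _ this
    exact sub_eq_zero.1 this
  choose Nk hNk using stab
  set x : ℕ → ℤ := fun k => (u (Nk k)).seq k with hx
  -- uniform estimate
  have unif : ∀ ε : ℝ, 0 < ε → ∃ M : ℕ, ∀ p ≥ M, ∀ k, nu k ((u p).seq k - x k) ≤ ε := by
    intro ε hε
    rcases hu ε hε with ⟨M, hM⟩
    refine ⟨M, fun p hp k => ?_⟩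
    set q := max M (Nk k) with hq
    have h1 : (u q).seq k = x k := by
      rw [hx]
      have h2 : (u q).seq k = (u (Nk k)).seq k := hNk k q (le_max_right _ _)
      exact h2
    have h3 : nu k ((u p).seq k - (u q).seq k) ≤ dist (u p) (u q) := H0.nu_le_dist _ _ k
    have h4 : dist (u p) (u q) < ε := hM p hp q (le_max_left _ _)
    rw [h1] at h3
    linarith
  -- x is in the group
  have hxmem : Tendsto (fun k => nu k (x k)) atTop (𝓝 0) := by
    rw [Metric.tendsto_atTop]
    intro ε hε
    rcases unif (ε / 3) (by linarith) with ⟨M, hM⟩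
    have hup := H0.tendsto (u M)
    rw [Metric.tendsto_atTop] at hup
    rcases hup (ε / 3) (by linarith) with ⟨K, hK⟩
    refine ⟨K, fun k hk => ?_⟩
    have h1 : nu k (x k - (u M).seq k) ≤ ε / 3 := by
      have := hM M (le_refl M) k
      rw [← nu_neg, neg_sub] at this
      exact this
    have h2 : nu k ((u M).seq k) < ε / 3 := by
      have := hK k hk
      rwa [Real.dist_eq, sub_zero, abs_of_nonneg (nu_nonneg _ _)] at this
    have h3 : nu k (x k) ≤ nu k (x k - (u M).seq k) + nu k ((u M).seq k) := by
      have := nu_add_le k (x k - (u M).seq k) ((u M).seq k)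
      rwa [sub_add_cancel] at this
    rw [Real.dist_eq, sub_zero, abs_of_nonneg (nu_nonneg _ _)]
    linarith
  set xh : H0 := ⟨x, hxmem⟩ with hxh
  refine ⟨xh, ?_⟩
  rw [Metric.tendsto_atTop]
  intro ε hε
  rcases unif (ε / 2) (by linarith) with ⟨M, hM⟩
  refine ⟨M, fun p hp => ?_⟩
  have : dist (u p) xh ≤ ε / 2 := by
    apply H0.dist_le
    intro k
    exact hM p hp k
  linarith

instance : PolishSpace H0 := inferInstance

lemma H0.seq_nsmul (n : ℕ) (x : H0) : (n • x).seq = n • x.seq := by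
  induction n with
  | zero =>
    rw [zero_smul, zero_smul]
    exact H0.seq_zero
  | succ m ih => rw [succ_nsmul, succ_nsmul, H0.seq_add, ih]

lemma H0.torsionFree : ∀ (x : H0) (n : ℕ), 0 < n → n • x = 0 → x = 0 := by
  intro x n hn h
  apply H0.seq_injective
  funext k
  have hs : (n • x).seq = n • x.seq := H0.seq_nsmul n x
  have : (n : ℤ) * x.seq k = 0 := by
    have h1 : (n • x).seq k = 0 := by rw [h, H0.seq_zero]; rfl
    rw [hs] at h1
    simpa [nsmul_eq_mul] using h1
  rcases mul_eq_zero.1 this with h | h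
  · exact absurd h (by exact_mod_cast hn.ne')
  · rw [h]; rfl

/-- The basic elements of `H0` supported at one coordinate. -/
def H0.single (m : ℕ) (c : ℤ) : H0 :=
  ⟨fun k => if k = m then c else 0, by
    apply Tendsto.congr' (f₁ := fun _ => (0:ℝ))
    · filter_upwards [Filter.eventually_atTop.2 ⟨m + 1, fun k hk => hk⟩] with k hk
      have : k ≠ m := by omega
      simp [this]
    · exact tendsto_const_nhds⟩

lemma H0.single_seq (m : ℕ) (c : ℤ) (k : ℕ) :
    (H0.single m c).seq k = if k = m then c else 0 := rfl

lemma H0.one_le_dist_single (m : ℕ) : (1:ℝ) ≤ dist (H0.single m 1) 0 := by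
  have h := H0.nu_le_dist (H0.single m 1) 0 m
  have h1 : (H0.single m 1).seq m - (0:H0).seq m = 1 := by
    rw [H0.single_seq, H0.seq_zero]
    simp
  rw [h1] at h
  refine le_trans ?_ h
  unfold nu
  have : ¬ Even (1:ℤ) := by decide
  rw [if_neg this]
  have : (0:ℝ) ≤ ((1:ℤ).natAbs : ℝ) / (2 * (m + 1)) := by positivity
  linarith

lemma H0.two_smul_single (m : ℕ) : (2:ℕ) • H0.single m 1 = H0.single m 2 := by
  apply H0.seq_injective
  funext k
  have : ((2:ℕ) • H0.single m 1).seq k = (H0.single m 1).seq k + (H0.single m 1).seq k := by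
    rw [two_nsmul, H0.seq_add]; rfl
  rw [this, H0.single_seq, H0.single_seq]
  split <;> norm_num

lemma H0.dist_single_two (m : ℕ) : dist (H0.single m 2) 0 ≤ 1 / (m + 1) := by
  apply H0.dist_le
  intro k
  have hk : (H0.single m 2).seq k - (0:H0).seq k = if k = m then 2 else 0 := by
    rw [H0.single_seq, H0.seq_zero]; simp
  rw [hk]
  by_cases h : k = m
  · rw [if_pos h, h]
    unfold nu
    have h2 : Even (2:ℤ) := ⟨1, by norm_num⟩
    rw [if_pos h2]
    have h3 : ((2:ℤ).natAbs : ℝ) = 2 := by norm_num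
    rw [h3]
    have hm : ((m:ℝ) + 1) ≠ 0 := by positivity
    have h4 : (2:ℝ) / (2 * (m + 1)) = 1 / (m + 1) := by
      field_simp
    rw [h4]
    simp
  · rw [if_neg h, nu_zero]
    positivity

lemma H0.tendsto_single_two : Tendsto (fun m => H0.single m 2) atTop (𝓝 (0 : H0)) := by
  rw [tendsto_iff_dist_tendsto_zero]
  apply squeeze_zero (fun m => dist_nonneg) (fun m => H0.dist_single_two m)
  exact_mod_cast tendsto_one_div_add_atTop_nhds_zero_nat (𝕜 := ℝ)

end

end GroupPolish

section Main

open Filter Topology Set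

/-- The main contradiction: `H0` admits no analytic divisible torsion-free extension. -/
theorem H0.no_extension (E : AnalyticDivisibleTorsionFreeExtension H0) : False := by
  letI : AddCommGroup E.carrier := E.grp
  letI : TopologicalSpace E.carrier := E.top
  haveI : IsTopologicalAddGroup E.carrier := E.topGrp
  obtain ⟨hmetr, P, tP, hP, π, hπc, hπs⟩ := E.analytic
  letI : TopologicalSpace P := tP
  haveI : PolishSpace P := hP
  haveI : TopologicalSpace.MetrizableSpace E.carrier := hmetr
  haveI : T2Space E.carrier := inferInstance
  haveI : TopologicalSpace.SeparableSpace E.carrier :=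
    hπs.denseRange.separableSpace hπc
  -- cancellation of doubling
  have cancel : ∀ a b : E.carrier, (2:ℕ) • a = (2:ℕ) • b → a = b := by
    intro a b hab
    have h2 : (2:ℕ) • (a - b) = 0 := by
      rw [smul_sub, hab, sub_self]
    have := E.torsionFree (a - b) 2 (by norm_num) h2
    exact sub_eq_zero.1 this
  -- the halving map
  have hdiv : ∀ h : H0, ∃ x : E.carrier, (2:ℕ) • x = E.embed h :=
    fun h => E.divisible (E.embed h) 2 (by norm_num)
  set f : H0 → E.carrier := fun h => (hdiv h).choose with hf
  have f_spec : ∀ h, (2:ℕ) • f h = E.embed h := fun h => (hdiv h).choose_spec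
  have f_sub : ∀ a b : H0, f (a - b) = f a - f b := by
    intro a b
    apply cancel
    rw [f_spec, smul_sub, f_spec, f_spec, map_sub]
  -- continuity of the halving map at 0
  have key : ∀ V ∈ 𝓝 (0 : E.carrier), f ⁻¹' V ∈ 𝓝 (0 : H0) := by
    intro V hV
    -- find an open O' with O' - O' ⊆ V
    have hsub0 : Tendsto (fun p : E.carrier × E.carrier => p.1 - p.2)
        (𝓝 (0, 0)) (𝓝 (0 : E.carrier)) := by
      have hc : Continuous (fun p : E.carrier × E.carrier => p.1 - p.2) := continuous_sub
      have := hc.tendsto ((0 : E.carrier), (0 : E.carrier))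
      simpa using this
    have hpre : (fun p : E.carrier × E.carrier => p.1 - p.2) ⁻¹' V ∈
        𝓝 ((0 : E.carrier), (0 : E.carrier)) := hsub0 hV
    rw [mem_nhds_prod_iff] at hpre
    obtain ⟨U1, hU1, U2, hU2, hU12⟩ := hpre
    set O' : Set E.carrier := interior (U1 ∩ U2) with hO'
    have hO'open : IsOpen O' := isOpen_interior
    have hO'mem : (0 : E.carrier) ∈ O' :=
      mem_interior_iff_mem_nhds.2 (Filter.inter_mem hU1 hU2)
    have hO'sub : ∀ a ∈ O', ∀ b ∈ O', a - b ∈ V := by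
      intro a ha b hb
      have ha' := interior_subset ha
      have hb' := interior_subset hb
      exact hU12 (Set.mk_mem_prod ha'.1 hb'.2)
    -- countable dense set
    obtain ⟨D, Dcnt, Ddense⟩ := TopologicalSpace.exists_countable_dense E.carrier
    have Dne : D.Nonempty := Ddense.nonempty
    obtain ⟨g, hg⟩ := Dcnt.exists_eq_range Dne
    -- the pieces of the cover
    set A : ℕ → Set H0 := fun n => f ⁻¹' ((g n + ·) '' O') with hA
    have hcover : (Set.univ : Set H0) ⊆ ⋃ n, A n := by
      intro h _
      -- find d ∈ D with f h ∈ d + O'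
      have hopen : IsOpen ((fun y => f h + - y) '' O') := by
        have : (fun y : E.carrier => f h + - y) =
            (Homeomorph.addLeft (f h)) ∘ (Homeomorph.neg E.carrier) := rfl
        rw [this, Set.image_comp]
        exact (Homeomorph.addLeft (f h)).isOpenMap _
          ((Homeomorph.neg E.carrier).isOpenMap _ hO'open)
      have hne : ((fun y => f h + - y) '' O').Nonempty :=
        ⟨f h, 0, hO'mem, by simp⟩
      obtain ⟨d, hd1, hd2⟩ := Ddense.inter_open_nonempty _ hopen hne
      rcases hd1 with ⟨o, ho, rfl⟩
      rw [hg] at hd2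
      rcases hd2 with ⟨n, hn⟩
      refine Set.mem_iUnion.2 ⟨n, ?_⟩
      show f h ∈ (g n + ·) '' O'
      refine ⟨o, ho, ?_⟩
      rw [hn]
      exact neg_add_cancel_right (f h) o
    -- some piece is nonmeager
    have hnm : ∃ n, ¬ IsMeagre (A n) := by
      by_contra hcon
      push_neg at hcon
      have : IsMeagre (⋃ n, A n) := isMeagre_iUnion hcon
      have huniv : IsMeagre (Set.univ : Set H0) := this.mono hcover
      rw [IsMeagre, Set.compl_univ] at huniv
      have hdense : Dense (∅ : Set H0) := dense_of_mem_residual huniv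
      exact Set.not_nonempty_empty (hdense.nonempty)
    obtain ⟨n, hn⟩ := hnm
    -- A n is Baire measurable since it is analytic
    have hbm : BaireMeasurableSet (A n) := by
      set T₁ : Set (H0 × P) := {w | (2:ℕ) • π w.2 = E.embed w.1} with hT₁
      have hT₁closed : IsClosed T₁ := by
        apply isClosed_eq
        · exact (continuous_nsmul 2).comp (hπc.comp continuous_snd)
        · exact E.embed_continuous.comp continuous_fst
      haveI : PolishSpace ↥T₁ := hT₁closed.polishSpace
      set S : Set ↥T₁ := {w | π (w : H0 × P).2 ∈ (g n + ·) '' O'} with hS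
      have hSopen : IsOpen S := by
        have himg : IsOpen ((g n + ·) '' O') :=
          (Homeomorph.addLeft (g n)).isOpenMap _ hO'open
        exact himg.preimage ((hπc.comp continuous_snd).comp continuous_subtype_val)
      haveI : PolishSpace ↥S := hSopen.polishSpace
      have hq : Continuous (fun w : ↥S => ((w : ↥T₁) : H0 × P).1) :=
        continuous_fst.comp (continuous_subtype_val.comp continuous_subtype_val)
      have hrange : Set.range (fun w : ↥S => ((w : ↥T₁) : H0 × P).1) = A n := by
        apply Set.Subset.antisymm
        · rintro _ ⟨w, rfl⟩
          have hw1 : (2:ℕ) • π ((w : ↥T₁) : H0 × P).2 =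
              E.embed ((w : ↥T₁) : H0 × P).1 := (w : ↥T₁).2
          have hw2 : π ((w : ↥T₁) : H0 × P).2 ∈ (g n + ·) '' O' := w.2
          have : f (((w : ↥T₁) : H0 × P).1) = π ((w : ↥T₁) : H0 × P).2 := by
            apply cancel
            rw [f_spec, hw1]
          show f (((w : ↥T₁) : H0 × P).1) ∈ (g n + ·) '' O'
          rw [this]
          exact hw2
        · intro h hh
          obtain ⟨p, hp⟩ := hπs (f h)
          have hmem1 : ((h, p) : H0 × P) ∈ T₁ := by
            show (2:ℕ) • π p = E.embed h
            rw [hp, f_spec]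
          have hmem2 : (⟨(h, p), hmem1⟩ : ↥T₁) ∈ S := by
            show π p ∈ (g n + ·) '' O'
            rw [hp]
            exact hh
          exact ⟨⟨⟨(h, p), hmem1⟩, hmem2⟩, rfl⟩
      rw [← hrange]
      exact baireMeasurableSet_range_of_polish hq
    -- Pettis
    have hpettis : A n - A n ∈ 𝓝 (0 : H0) := pettis hbm hn
    apply Filter.mem_of_superset hpettis
    rintro x ⟨a, ha, b, hb, rfl⟩
    rcases ha with ⟨oa, hoa, hfa⟩
    rcases hb with ⟨ob, hob, hfb⟩
    show f (a - b) ∈ V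
    rw [f_sub]
    have : f a - f b = oa - ob := by rw [← hfa, ← hfb]; exact add_sub_add_left_eq_sub _ _ _
    rw [this]
    exact hO'sub oa hoa ob hob
  -- the contradiction with the witnesses
  have hfy : ∀ m, f (H0.single m 2) = E.embed (H0.single m 1) := by
    intro m
    apply cancel
    rw [f_spec, ← map_nsmul, H0.two_smul_single]
  have htends : Tendsto (fun m => f (H0.single m 2)) atTop (𝓝 (0 : E.carrier)) := by
    rw [tendsto_def]
    intro V hV
    have h1 := key V hV
    have h2 := tendsto_def.1 H0.tendsto_single_two _ h1
    exact h2
  have htends' : Tendsto (fun m => E.embed (H0.single m 1)) atTop (𝓝 (0 : E.carrier)) := by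
    refine htends.congr fun m => hfy m
  have htendsH : Tendsto (fun m => H0.single m 1) atTop (𝓝 (0 : H0)) := by
    rw [E.embed_isEmbedding.tendsto_nhds_iff]
    have : E.embed (0 : H0) = 0 := map_zero _
    rw [show ((⇑E.embed) ∘ fun m => H0.single m 1) = fun m => E.embed (H0.single m 1) from rfl,
      this]
    exact htends'
  rw [Metric.tendsto_atTop] at htendsH
  obtain ⟨m, hm⟩ := htendsH 1 one_pos
  have h0 := hm m (le_refl m)
  have h1 := H0.one_le_dist_single m
  linarith [h0, h1]

/-- There exists a Polish abelian topological group with no torsion that is not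
topologically isomorphic to any subgroup of a divisible analytic abelian topological
group with no torsion. -/
theorem exists_polish_torsionFree_group_not_embeddable_in_analytic_divisible :
    Nonempty NonEmbeddablePolishGroup := by
  refine ⟨{ carrier := H0
            topGrp := inferInstance
            polish := inferInstance
            torsionFree := H0.torsionFree
            no_extension := ⟨H0.no_extension⟩ }⟩

end Main
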